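/- The family of behaviors of deterministic splitters is not closed under Kleene star: over the alphabet A = {a,b} (a ≠ b), with L = {(b, aⁿ, baⁿ) : n ∈ ℕ} ⊆ U, the Kleene star L* (the submonoid-closure {x₁⋯x_k : k ≥ 0, each x_i ∈ L}) is not the behavior of any deterministic splitter, although L itself is the behavior of a deterministic splitter with finitely many states. -/

import Mathlib

/-!
Both `(b, a, ba)` and `(bb, ε, bb)` lie in `L*`. A deterministic splitter reads the common
first input letter `b` along the same transition from its unique initial state, so both runs
pass through the same state `p`. From `p` the run of `(bb, ε, bb)` writes the second letter to
the first tape, while the run of `(b, a, ba)` writes it to the second tape; this contradicts the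
requirement that all transitions leaving `p` write to the same tape.
-/

/-- Words over the alphabet `A`, i.e. elements of the free monoid `A*`. -/
abbrev Word (A : Type) := List A

/-- The generating set `G = {(a,ε,a) : a ∈ A} ∪ {(ε,a,a) : a ∈ A}` of the
Shuffling Monoid. -/
def genG (A : Type) : Set (Word A × Word A × Word A) :=
  {g | ∃ a : A, g = ([a], [], [a]) ∨ g = ([], [a], [a])}

/-- Componentwise product (concatenation) of a list of triples of words. -/
def prodTriple {A : Type} (ls : List (Word A × Word A × Word A)) :
    Word A × Word A × Word A :=
  ((ls.map fun l => l.1).flatten, (ls.map fun l => l.2.1).flatten,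
    (ls.map fun l => l.2.2).flatten)

/-- The Shuffling Monoid `U`: the submonoid of `A* × A* × A*` generated by `G`,
described as the set of all products of finite sequences of generators. -/
def shuffleU (A : Type) : Set (Word A × Word A × Word A) :=
  {m | ∃ ls : List (Word A × Word A × Word A), (∀ l ∈ ls, l ∈ genG A) ∧ prodTriple ls = m}

/-- A spliffer (equivalently, splitter) over `A`: a finite automaton whose
transitions are labeled by elements of `G`. -/
structure Spliffer (A : Type) where
  Q : Type
  finQ : Finite Q
  E : Q → (Word A × Word A × Word A) → Q → Prop
  I : Set Q
  T : Set Q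
  labels_mem : ∀ {q l q'}, E q l q' → l ∈ genG A

/-- Paths in a spliffer, recording the sequence of labels. -/
inductive Spliffer.Path {A : Type} (S : Spliffer A) :
    S.Q → List (Word A × Word A × Word A) → S.Q → Prop
  | nil (q : S.Q) : Spliffer.Path S q [] q
  | cons {q q' q'' : S.Q} {l : Word A × Word A × Word A}
      {ls : List (Word A × Word A × Word A)} :
      S.E q l q' → Spliffer.Path S q' ls q'' → Spliffer.Path S q (l :: ls) q''

/-- The behavior `|S|` of a spliffer: products of the label sequences of all
successful runs. -/
def Spliffer.behavior {A : Type} (S : Spliffer A) : Set (Word A × Word A × Word A) :=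
  {m | ∃ q ∈ S.I, ∃ q' ∈ S.T, ∃ ls, S.Path q ls q' ∧ prodTriple ls = m}

/-- A splitter is deterministic if it has a single initial state, for every state
and input letter there is at most one outgoing transition reading that letter,
and all transitions leaving a given state write to the same tape. -/
def Spliffer.Deterministic {A : Type} (S : Spliffer A) : Prop :=
  (∃! i, i ∈ S.I) ∧
  (∀ ⦃q l₁ q₁ l₂ q₂⦄, S.E q l₁ q₁ → S.E q l₂ q₂ → l₁.2.2 = l₂.2.2 → l₁ = l₂ ∧ q₁ = q₂) ∧
  (∀ ⦃q l₁ q₁ l₂ q₂⦄, S.E q l₁ q₁ → S.E q l₂ q₂ →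
    (l₁.1 = [] ∧ l₂.1 = []) ∨ (l₁.2.1 = [] ∧ l₂.2.1 = []))

/-- The set `L = {(b, aⁿ, baⁿ) : n ∈ ℕ}`. -/
def setLb {A : Type} (a b : A) : Set (Word A × Word A × Word A) :=
  {x | ∃ n : ℕ, x = ([b], List.replicate n a, b :: List.replicate n a)}

section

variable {A : Type}

@[simp]
lemma prodTriple_nil : prodTriple ([] : List (Word A × Word A × Word A)) = ([], [], []) := rfl

@[simp]
lemma prodTriple_cons (l : Word A × Word A × Word A) (ls : List (Word A × Word A × Word A)) :
    prodTriple (l :: ls) =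
      (l.1 ++ (prodTriple ls).1, l.2.1 ++ (prodTriple ls).2.1, l.2.2 ++ (prodTriple ls).2.2) :=
  rfl

lemma length_snd_snd_of_mem_genG {g : Word A × Word A × Word A} (hg : g ∈ genG A) :
    g.2.2.length = 1 := by
  obtain ⟨x, rfl | rfl⟩ := hg <;> rfl

lemma length_fst_add_length_fst_snd_of_mem_genG {g : Word A × Word A × Word A}
    (hg : g ∈ genG A) : g.1.length + g.2.1.length = 1 := by
  obtain ⟨x, rfl | rfl⟩ := hg <;> rfl

namespace Spliffer

variable {S : Spliffer A} {q r : S.Q} {l : Word A × Word A × Word A}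
  {ls : List (Word A × Word A × Word A)}

lemma Path.nil_iff : S.Path q [] r ↔ q = r :=
  ⟨fun | .nil _ => rfl, fun h => h ▸ .nil q⟩

lemma Path.cons_iff : S.Path q (l :: ls) r ↔ ∃ p, S.E q l p ∧ S.Path p ls r :=
  ⟨fun | .cons he hp => ⟨_, he, hp⟩, fun ⟨_, he, hp⟩ => .cons he hp⟩

lemma Path.length_snd_snd_prodTriple (hp : S.Path q ls r) :
    (prodTriple ls).2.2.length = ls.length := by
  induction hp with
  | nil => rfl
  | cons he _ ih => simp [length_snd_snd_of_mem_genG (S.labels_mem he), ih, add_comm]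

lemma Path.forall_mem_genG (hp : S.Path q ls r) : ∀ l ∈ ls, l ∈ genG A := by
  induction hp with
  | nil => simp
  | cons he _ ih => exact List.forall_mem_cons.mpr ⟨S.labels_mem he, ih⟩

lemma Path.exists_eq_pair (hp : S.Path q ls r) {c d : A} (h : (prodTriple ls).2.2 = [c, d]) :
    ∃ l₁ l₂, ls = [l₁, l₂] ∧ l₁.2.2 = [c] := by
  have hlen : ls.length = 2 := by rw [← hp.length_snd_snd_prodTriple, h]; rfl
  obtain ⟨l₁, l₂, rfl⟩ := List.length_eq_two.mp hlen
  have hin : l₁.2.2 ++ l₂.2.2 = [c] ++ [d] := by simpa using h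
  have hl₁ := length_snd_snd_of_mem_genG (hp.forall_mem_genG l₁ (by simp))
  exact ⟨l₁, l₂, rfl, (List.append_inj hin hl₁).1⟩

/-- The first input letter determines the first transition, hence the state reached, hence the
tape to which the second letter is written (`l₂.1 = []` means the second tape). -/
lemma Deterministic.eq_and_fst_eq_nil_iff_of_path (hS : S.Deterministic) {i₁ i₂ r₁ r₂ : S.Q}
    {l₁ l₂ l₁' l₂' : Word A × Word A × Word A} (hi₁ : i₁ ∈ S.I) (hi₂ : i₂ ∈ S.I)
    (hp : S.Path i₁ [l₁, l₂] r₁) (hp' : S.Path i₂ [l₁', l₂'] r₂) (h : l₁.2.2 = l₁'.2.2) :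
    l₁ = l₁' ∧ (l₂.1 = [] ↔ l₂'.1 = []) := by
  obtain rfl := hS.1.unique hi₁ hi₂
  obtain ⟨p, he₁, _, he₂, -⟩ : ∃ p, S.E i₁ l₁ p ∧ ∃ r, S.E p l₂ r ∧ r = r₁ := by
    simpa only [Path.cons_iff, Path.nil_iff] using hp
  obtain ⟨p', he₁', _, he₂', -⟩ : ∃ p, S.E i₁ l₁' p ∧ ∃ r, S.E p l₂' r ∧ r = r₂ := by
    simpa only [Path.cons_iff, Path.nil_iff] using hp'
  obtain ⟨rfl, rfl⟩ := hS.2.1 he₁ he₁' h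
  refine ⟨rfl, ?_⟩
  have hl₂ := length_fst_add_length_fst_snd_of_mem_genG (S.labels_mem he₂)
  have hl₂' := length_fst_add_length_fst_snd_of_mem_genG (S.labels_mem he₂')
  rcases hS.2.2 he₂ he₂' with ⟨h₁, h₁'⟩ | ⟨h₂, h₂'⟩
  · simp [h₁, h₁']
  · simp_all [← List.length_eq_zero_iff]

lemma Deterministic.not_mem_behavior_of_mem (hS : S.Deterministic) {a b : A}
    (h : ([b], [a], [b, a]) ∈ S.behavior) : ([b, b], [], [b, b]) ∉ S.behavior := by
  rintro ⟨i', hi', _, -, ls', hp', hm'⟩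
  obtain ⟨i, hi, _, -, ls, hp, hm⟩ := h
  obtain ⟨l₁, l₂, rfl, hl₁⟩ := hp.exists_eq_pair (congrArg (·.2.2) hm)
  obtain ⟨l₁', l₂', rfl, hl₁'⟩ := hp'.exists_eq_pair (congrArg (·.2.2) hm')
  obtain ⟨rfl, htape⟩ := hS.eq_and_fst_eq_nil_iff_of_path hi hi' hp hp' (hl₁.trans hl₁'.symm)
  have hg₁ := length_fst_add_length_fst_snd_of_mem_genG (hp.forall_mem_genG l₁ (by simp))
  have hg₂' := length_fst_add_length_fst_snd_of_mem_genG (hp'.forall_mem_genG l₂' (by simp))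
  simp only [prodTriple_cons, prodTriple_nil, List.append_nil, Prod.mk.injEq,
    List.append_eq_nil_iff] at hm hm'
  have h₁ : l₁.1.length + l₂.1.length = 1 := by simpa using congrArg List.length hm.1
  simp only [hm'.2.1.1, hm'.2.1.2, List.length_nil, add_zero] at hg₁ hg₂'
  have hl₂' : l₂'.1 = [] := htape.mp (List.eq_nil_of_length_eq_zero (by omega))
  simp [hl₂'] at hg₂'

end Spliffer

section setLb

variable (a b : A)

def setLbSplitter : Spliffer A where
  Q := Bool
  finQ := inferInstance
  E q l q' := q' = true ∧ l = if q then ([], [a], [a]) else ([b], [], [b])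
  I := {false}
  T := {true}
  labels_mem := by
    rintro (_ | _) l q' ⟨-, rfl⟩
    exacts [⟨b, .inl rfl⟩, ⟨a, .inr rfl⟩]

lemma setLbSplitter_deterministic : (setLbSplitter a b).Deterministic := by
  refine ⟨⟨false, rfl, fun _ => id⟩, ?_, ?_⟩
  · rintro q l₁ q₁ l₂ q₂ ⟨rfl, rfl⟩ ⟨rfl, rfl⟩ -
    exact ⟨rfl, rfl⟩
  · rintro (_ | _) l₁ q₁ l₂ q₂ ⟨-, rfl⟩ ⟨-, rfl⟩ <;> simp

lemma setLbSplitter_path_true_iff {ls : List (Word A × Word A × Word A)} {q : Bool} :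
    (setLbSplitter a b).Path true ls q ↔
      q = true ∧ ls = List.replicate ls.length ([], [a], [a]) := by
  induction ls with
  | nil => exact Spliffer.Path.nil_iff.trans (by simpa using ⟨Eq.symm, Eq.symm⟩)
  | cons l ls ih =>
    refine Spliffer.Path.cons_iff.trans ?_
    rw [List.length_cons, List.replicate_succ, List.cons.injEq]
    constructor
    · rintro ⟨_, ⟨rfl, rfl⟩, hp⟩
      exact ⟨(ih.mp hp).1, rfl, (ih.mp hp).2⟩
    · rintro ⟨rfl, rfl, hls⟩
      exact ⟨true, ⟨rfl, rfl⟩, ih.mpr ⟨rfl, hls⟩⟩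

lemma prodTriple_cons_replicate (n : ℕ) :
    prodTriple (([b], [], [b]) :: List.replicate n ([], [a], [a])) =
      ([b], List.replicate n a, b :: List.replicate n a) := by
  simp [prodTriple, List.map_replicate]

lemma setLbSplitter_behavior : (setLbSplitter a b).behavior = setLb a b := by
  ext m
  constructor
  · rintro ⟨_, rfl, _, rfl, _ | ⟨l, ls⟩, hp, rfl⟩
    · exact absurd (Spliffer.Path.nil_iff.mp hp) Bool.false_ne_true
    · obtain ⟨_, ⟨rfl, rfl⟩, hls⟩ := Spliffer.Path.cons_iff.mp hp
      rw [((setLbSplitter_path_true_iff a b).mp hls).2]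
      exact ⟨ls.length, prodTriple_cons_replicate a b _⟩
  · rintro ⟨n, rfl⟩
    refine ⟨false, rfl, true, rfl, _, .cons ⟨rfl, rfl⟩ ?_, prodTriple_cons_replicate a b n⟩
    exact (setLbSplitter_path_true_iff a b).mpr ⟨rfl, by simp⟩

end setLb

end

theorem drat_not_closed_under_star_general {A : Type} (a b : A) :
    (∃ S : Spliffer A, S.Deterministic ∧ S.behavior = setLb a b) ∧
    ¬ ∃ S : Spliffer A, S.Deterministic ∧ S.behavior =
        {m : Word A × Word A × Word A | ∃ ls : List (Word A × Word A × Word A),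
          (∀ x ∈ ls, x ∈ setLb a b) ∧ prodTriple ls = m} := by
  refine ⟨⟨setLbSplitter a b, setLbSplitter_deterministic a b, setLbSplitter_behavior a b⟩, ?_⟩
  rintro ⟨S, hS, hbeh⟩
  refine hS.not_mem_behavior_of_mem (a := a) (b := b) ?_ ?_ <;> rw [hbeh]
  · exact ⟨[([b], [a], [b, a])], by simpa using ⟨1, rfl⟩, by simp⟩
  · exact ⟨[([b], [], [b]), ([b], [], [b])], by simpa using ⟨0, rfl⟩, by simp⟩

/-- over `A = {a,b}`, with `L = {(b, aⁿ, baⁿ) : n ∈ ℕ}`, the Kleene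
star `L*` (all finite products of elements of `L`) is not the behavior of any
deterministic splitter, although `L` is. -/
theorem drat_not_closed_under_star {A : Type} (a b : A) (hab : a ≠ b)
    (hA : ∀ x : A, x = a ∨ x = b) :
    (∃ S : Spliffer A, S.Deterministic ∧ S.behavior = setLb a b) ∧
    ¬ ∃ S : Spliffer A, S.Deterministic ∧ S.behavior =
        {m : Word A × Word A × Word A | ∃ ls : List (Word A × Word A × Word A),
          (∀ x ∈ ls, x ∈ setLb a b) ∧ prodTriple ls = m} :=
  drat_not_closed_under_star_general a b
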